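/- Let (E, sim, ser) be a comtrace alphabet. For each step sequence v there exists exactly one canonical step sequence u such that v ≡ u. -/

import Mathlib

variable {E : Type*}

/-- A step over a comtrace alphabet `(E, sim, ser)`: a nonempty finite set of events,
pairwise related by `sim`. -/
def IsStep [DecidableEq E] (sim : E → E → Prop) (A : Finset E) : Prop :=
  A.Nonempty ∧ ∀ a ∈ A, ∀ b ∈ A, a ≠ b → sim a b

/-- A step sequence: a finite list of steps. -/
def IsStepSeq [DecidableEq E] (sim : E → E → Prop) (u : List (Finset E)) : Prop :=
  ∀ A ∈ u, IsStep sim A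

/-- The generating relation of comtrace congruence:
`w·A·z ≈ w·B·C·z` whenever `A`, `B`, `C` are steps with `B ∪ C = A` and `B × C ⊆ ser`. -/
def CTBase [DecidableEq E] (sim ser : E → E → Prop) (u v : List (Finset E)) : Prop :=
  ∃ (w z : List (Finset E)) (A B C : Finset E),
    IsStepSeq sim w ∧ IsStepSeq sim z ∧
    IsStep sim A ∧ IsStep sim B ∧ IsStep sim C ∧
    B ∪ C = A ∧ (∀ b ∈ B, ∀ c ∈ C, ser b c) ∧
    u = w ++ A :: z ∧ v = w ++ B :: C :: z

/-- The least equivalence relation containing `base`. -/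
def LeastEquiv {α : Type*} (base : α → α → Prop) (x y : α) : Prop :=
  ∀ c : α → α → Prop, Equivalence c → (∀ a b, base a b → c a b) → c x y

/-- Comtrace congruence: the least equivalence relation containing `CTBase`. -/
def CTEquiv [DecidableEq E] (sim ser : E → E → Prop) :
    List (Finset E) → List (Finset E) → Prop :=
  LeastEquiv (CTBase sim ser)

/-- Forward dependency on steps: `(A, B) ∈ FD` iff there is a step `C ⊆ B` with
`A × C ⊆ ser` and `C × (B \ C) ⊆ ser`. -/
def FD [DecidableEq E] (sim ser : E → E → Prop) (A B : Finset E) : Prop :=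
  ∃ C : Finset E, IsStep sim C ∧ C ⊆ B ∧
    (∀ a ∈ A, ∀ c ∈ C, ser a c) ∧ (∀ c ∈ C, ∀ b ∈ B \ C, ser c b)

/-- A step sequence `A₁…A_k` is canonical iff `(Aᵢ, Aᵢ₊₁) ∉ FD` for all `1 ≤ i < k`. -/
def Canonical [DecidableEq E] (sim ser : E → E → Prop) (u : List (Finset E)) : Prop :=
  u.Chain' (fun A B => ¬ FD sim ser A B)

/-!
Orient the congruence into the rewriting system `Fold`: whenever `C` witnesses `(A, B) ∈ FD`,
rewrite `… A B …` to `… (A ∪ C) (B \ C) …`, dropping `B \ C` when it is empty. Each generating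
move `A ↦ B C` of `≡` is undone by a fold with witness `C`, and each fold is a composite of
such moves, so `≡` is the equivalence generated by `Fold`; the normal forms of `Fold` are
exactly the canonical sequences. Folding moves events to earlier positions, so it terminates;
its critical pairs (folds at the same, adjacent or distant positions) are joinable. By Newman's
lemma every `≡`-class then contains exactly one normal form.
-/

open Relation

namespace Relation

variable {α : Type*} {r : α → α → Prop}

theorem exists_reflTransGen_forall_not (hwf : WellFounded (flip r)) (a : α) :
    ∃ b, ReflTransGen r a b ∧ ∀ c, ¬ r b c := by
  obtain ⟨b, hab, hb⟩ := hwf.has_min {b | ReflTransGen r a b} ⟨a, .refl⟩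
  exact ⟨b, hab, fun c hbc => hb c (hab.tail hbc) hbc⟩

theorem ReflTransGen.eq_of_forall_not {a b : α} (h : ReflTransGen r a b)
    (ha : ∀ c, ¬ r a c) : a = b := by
  rcases h.cases_head with rfl | ⟨c, hac, -⟩
  · rfl
  · exact absurd hac (ha c)

/-- Newman's lemma. -/
theorem church_rosser_of_wellFounded (hwf : WellFounded (flip r))
    (hlc : ∀ a b c, r a b → r a c → Join (ReflTransGen r) b c) {a b c : α}
    (hab : ReflTransGen r a b) (hac : ReflTransGen r a c) : Join (ReflTransGen r) b c := by
  induction a using hwf.induction generalizing b c with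
  | _ a ih =>
  rcases hab.cases_head with rfl | ⟨b', hab', hb'b⟩
  · exact ⟨c, hac, .refl⟩
  rcases hac.cases_head with rfl | ⟨c', hac', hc'c⟩
  · exact ⟨b, .refl, .head hab' hb'b⟩
  obtain ⟨d, hb'd, hc'd⟩ := hlc a b' c' hab' hac'
  obtain ⟨e, hbe, hde⟩ := ih b' hab' hb'b hb'd
  obtain ⟨f, hcf, hef⟩ := ih c' hac' hc'c (hc'd.trans hde)
  exact ⟨f, hbe.trans hef, hcf⟩

theorem eq_of_eqvGen_of_forall_not (hwf : WellFounded (flip r))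
    (hlc : ∀ a b c, r a b → r a c → Join (ReflTransGen r) b c) {a b : α} (h : EqvGen r a b)
    (ha : ∀ c, ¬ r a c) (hb : ∀ c, ¬ r b c) : a = b := by
  have hequiv : Equivalence (Join (ReflTransGen r)) :=
    equivalence_join fun _ _ _ => church_rosser_of_wellFounded hwf hlc
  obtain ⟨c, hac, hbc⟩ :=
    hequiv.eqvGen_iff.1 (EqvGen.mono (fun x y hxy => ⟨y, .single hxy, .refl⟩) _ _ h)
  rw [hac.eq_of_forall_not ha, hbc.eq_of_forall_not hb]

end Relation

theorem leastEquiv_iff_eqvGen {α : Type*} {r : α → α → Prop} {x y : α} :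
    LeastEquiv r x y ↔ EqvGen r x y := by
  refine ⟨fun h => h _ (EqvGen.is_equivalence r) EqvGen.rel, fun h c hc hr => ?_⟩
  have := hc.isEquiv
  exact EqvGen.eqvGen_le hr _ _ h

theorem disjoint_of_ser {sim ser : E → E → Prop} {A C : Finset E}
    (hsim_irr : ∀ a, ¬ sim a a) (hser_sub : ∀ a b, ser a b → sim a b)
    (h : ∀ a ∈ A, ∀ c ∈ C, ser a c) : Disjoint A C :=
  Finset.disjoint_left.2 fun {x} hxA hxC => hsim_irr x (hser_sub x x (h x hxA x hxC))

section Steps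

variable [DecidableEq E] {sim ser : E → E → Prop} {A B C : Finset E} {u v : List (Finset E)}

theorem IsStep.mono (hB : IsStep sim B) (hAB : A ⊆ B) (hA : A.Nonempty) : IsStep sim A :=
  ⟨hA, fun a ha b hb hab => hB.2 a (hAB ha) b (hAB hb) hab⟩

theorem IsStep.union (hsim_symm : ∀ a b, sim a b → sim b a) (hser_sub : ∀ a b, ser a b → sim a b)
    (hA : IsStep sim A) (hC : IsStep sim C) (h : ∀ a ∈ A, ∀ c ∈ C, ser a c) :
    IsStep sim (A ∪ C) := by
  refine ⟨hA.1.mono Finset.subset_union_left, fun a ha b hb hab => ?_⟩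
  rcases Finset.mem_union.1 ha with ha | ha <;> rcases Finset.mem_union.1 hb with hb | hb
  · exact hA.2 a ha b hb hab
  · exact hser_sub _ _ (h a ha b hb)
  · exact hsim_symm _ _ (hser_sub _ _ (h b hb a ha))
  · exact hC.2 a ha b hb hab

@[simp]
theorem isStepSeq_nil : IsStepSeq sim [] := List.forall_mem_nil _

@[simp]
theorem isStepSeq_cons : IsStepSeq sim (A :: u) ↔ IsStep sim A ∧ IsStepSeq sim u :=
  List.forall_mem_cons

@[simp]
theorem isStepSeq_append : IsStepSeq sim (u ++ v) ↔ IsStepSeq sim u ∧ IsStepSeq sim v :=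
  List.forall_mem_append

end Steps

namespace Comtrace

section Lists

variable {A : Finset E} {u v : List (Finset E)}

def consNonempty (S : Finset E) (z : List (Finset E)) : List (Finset E) :=
  if S.Nonempty then S :: z else z

theorem consNonempty_of_nonempty (h : A.Nonempty) (z : List (Finset E)) :
    consNonempty A z = A :: z := if_pos h

@[simp]
theorem consNonempty_empty (z : List (Finset E)) : consNonempty (∅ : Finset E) z = z :=
  if_neg Finset.not_nonempty_empty

theorem consNonempty_append (S : Finset E) (x y : List (Finset E)) :
    consNonempty S (x ++ y) = consNonempty S x ++ y := by
  unfold consNonempty; split_ifs <;> rfl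

def size (u : List (Finset E)) : ℕ := (u.map Finset.card).sum

@[simp]
theorem size_nil : size ([] : List (Finset E)) = 0 := rfl

@[simp]
theorem size_cons : size (A :: u) = A.card + size u := List.sum_cons

@[simp]
theorem size_append : size (u ++ v) = size u + size v := by
  simp [size]

/-- `∑ i, (i + 1) * |Aᵢ|` for `u = A₀ A₁ …`. -/
def weight : List (Finset E) → ℕ
  | [] => 0
  | A :: t => size (A :: t) + weight t

theorem weight_append : weight (u ++ v) = weight u + u.length * size v + weight v := by
  induction u with
  | nil => simp [weight]
  | cons A t ih => simp only [List.cons_append, weight, ih, size_cons, size_append,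
      List.length_cons]; ring

end Lists

variable [DecidableEq E] {sim ser : E → E → Prop} {A B C D : Finset E} {u v w z : List (Finset E)}

theorem isStepSeq_consNonempty_sdiff (hB : IsStep sim B) (hz : IsStepSeq sim z) :
    IsStepSeq sim (consNonempty (B \ C) z) := by
  unfold consNonempty
  split_ifs with h
  · exact isStepSeq_cons.2 ⟨hB.mono Finset.sdiff_subset h, hz⟩
  · exact hz

structure FDWitness (sim ser : E → E → Prop) (A B C : Finset E) : Prop where
  isStep : IsStep sim C
  subset : C ⊆ B
  ser_left : ∀ a ∈ A, ∀ c ∈ C, ser a c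
  ser_right : ∀ c ∈ C, ∀ b ∈ B \ C, ser c b

theorem fd_iff_exists_fdWitness : FD sim ser A B ↔ ∃ C, FDWitness sim ser A B C :=
  ⟨fun ⟨C, h₁, h₂, h₃, h₄⟩ => ⟨C, h₁, h₂, h₃, h₄⟩, fun ⟨C, h₁, h₂, h₃, h₄⟩ => ⟨C, h₁, h₂, h₃, h₄⟩⟩

theorem FDWitness.of_ser (hC : IsStep sim C) (h : ∀ b ∈ B, ∀ c ∈ C, ser b c) :
    FDWitness sim ser B C C :=
  ⟨hC, subset_rfl, h, fun _ _ _ hb => absurd hb (by simp)⟩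

theorem FDWitness.mono_left (hC : FDWitness sim ser A B C) (hDA : D ⊆ A) :
    FDWitness sim ser D B C :=
  ⟨hC.isStep, hC.subset, fun a ha => hC.ser_left a (hDA ha), hC.ser_right⟩

theorem FDWitness.sdiff {C₁ C₂ : Finset E} (h₁ : FDWitness sim ser A B C₁)
    (h₂ : FDWitness sim ser A B C₂) (hne : (C₂ \ C₁).Nonempty) :
    FDWitness sim ser (A ∪ C₁) (B \ C₁) (C₂ \ C₁) where
  isStep := h₂.isStep.mono Finset.sdiff_subset hne
  subset := Finset.sdiff_subset_sdiff h₂.subset subset_rfl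
  ser_left a ha c hc := by
    rcases Finset.mem_union.1 ha with ha | ha
    · exact h₂.ser_left a ha c (Finset.sdiff_subset hc)
    · exact h₁.ser_right a ha c (Finset.sdiff_subset_sdiff h₂.subset subset_rfl hc)
  ser_right c hc b hb := by
    simp only [Finset.mem_sdiff] at hc hb
    exact h₂.ser_right c hc.1 b (Finset.mem_sdiff.2 ⟨hb.1.1, fun hb₂ => hb.2 ⟨hb₂, hb.1.2⟩⟩)

def Fold (sim ser : E → E → Prop) (u v : List (Finset E)) : Prop :=
  IsStepSeq sim u ∧ ∃ (w z : List (Finset E)) (A B C : Finset E), FDWitness sim ser A B C ∧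
    u = w ++ A :: B :: z ∧ v = w ++ (A ∪ C) :: consNonempty (B \ C) z

theorem Fold.mk (hu : IsStepSeq sim (w ++ A :: B :: z)) (hC : FDWitness sim ser A B C) :
    Fold sim ser (w ++ A :: B :: z) (w ++ (A ∪ C) :: consNonempty (B \ C) z) :=
  ⟨hu, w, z, A, B, C, hC, rfl, rfl⟩

theorem Fold.isStepSeq_right (hsim_symm : ∀ a b, sim a b → sim b a)
    (hser_sub : ∀ a b, ser a b → sim a b) (h : Fold sim ser u v) : IsStepSeq sim v := by
  obtain ⟨hu, w, z, A, B, C, hC, rfl, rfl⟩ := h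
  simp only [isStepSeq_append, isStepSeq_cons] at hu ⊢
  exact ⟨hu.1, hu.2.1.union hsim_symm hser_sub hC.isStep hC.ser_left,
    isStepSeq_consNonempty_sdiff hu.2.2.1 hu.2.2.2⟩

theorem isStepSeq_of_reflTransGen_fold (hsim_symm : ∀ a b, sim a b → sim b a)
    (hser_sub : ∀ a b, ser a b → sim a b) (hu : IsStepSeq sim u)
    (h : ReflTransGen (Fold sim ser) u v) : IsStepSeq sim v := by
  rcases h.cases_tail with rfl | ⟨_, -, h⟩
  · exact hu
  · exact h.isStepSeq_right hsim_symm hser_sub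

theorem Fold.append_left {x : List (Finset E)} (hx : IsStepSeq sim x) (h : Fold sim ser u v) :
    Fold sim ser (x ++ u) (x ++ v) := by
  obtain ⟨hu, w, z, A, B, C, hC, rfl, rfl⟩ := h
  have hxu : IsStepSeq sim ((x ++ w) ++ A :: B :: z) := by
    rw [List.append_assoc]
    exact isStepSeq_append.2 ⟨hx, hu⟩
  simpa using Fold.mk hxu hC

theorem join_fold_append_left {x : List (Finset E)} (hx : IsStepSeq sim x)
    (h : Join (ReflTransGen (Fold sim ser)) u v) :
    Join (ReflTransGen (Fold sim ser)) (x ++ u) (x ++ v) :=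
  let ⟨d, hud, hvd⟩ := h
  have hlift := ReflTransGen.lift (x ++ ·) fun _ _ h => h.append_left hx
  ⟨x ++ d, hlift _ _ hud, hlift _ _ hvd⟩

theorem canonical_iff_forall_not_fold (hu : IsStepSeq sim u) :
    Canonical sim ser u ↔ ∀ v, ¬ Fold sim ser u v := by
  change List.IsChain _ u ↔ _
  simp only [List.isChain_iff_forall_rel_of_append_cons_cons, fd_iff_exists_fdWitness,
    not_exists]
  constructor
  · rintro h v ⟨-, w, z, A, B, C, hC, rfl, -⟩
    exact h rfl C hC
  · rintro h A B w z rfl C hC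
    exact h _ (Fold.mk hu hC)

theorem Fold.weight_lt (hsim_irr : ∀ a, ¬ sim a a) (hser_sub : ∀ a b, ser a b → sim a b)
    (h : Fold sim ser u v) : weight v < weight u := by
  obtain ⟨-, w, z, A, B, C, hC, rfl, rfl⟩ := h
  have hAC : (A ∪ C).card = A.card + C.card :=
    Finset.card_union_of_disjoint (disjoint_of_ser hsim_irr hser_sub hC.ser_left)
  have hBC : (B \ C).card + C.card = B.card := Finset.card_sdiff_add_card_eq_card hC.subset
  have hC₀ : 0 < C.card := Finset.card_pos.2 hC.isStep.1
  obtain ⟨hsize, hweight⟩ :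
      size ((A ∪ C) :: consNonempty (B \ C) z) = size (A :: B :: z) ∧
        weight ((A ∪ C) :: consNonempty (B \ C) z) < weight (A :: B :: z) := by
    by_cases hne : (B \ C).Nonempty
    · rw [consNonempty_of_nonempty hne]
      simp only [weight, size_cons]
      omega
    · rw [Finset.not_nonempty_iff_eq_empty.1 hne, Finset.card_empty] at hBC
      rw [Finset.not_nonempty_iff_eq_empty.1 hne, consNonempty_empty]
      simp only [weight, size_cons]
      omega
  rw [weight_append, weight_append, hsize]
  omega

theorem wellFounded_flip_fold (hsim_irr : ∀ a, ¬ sim a a)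
    (hser_sub : ∀ a b, ser a b → sim a b) : WellFounded (flip (Fold sim ser)) :=
  Subrelation.wf (fun h => h.weight_lt hsim_irr hser_sub) (measure weight).wf

theorem reflTransGen_fold_union_witness (hsim_symm : ∀ a b, sim a b → sim b a)
    (hser_sub : ∀ a b, ser a b → sim a b) {C₁ C₂ : Finset E} (hu : IsStepSeq sim (A :: B :: z))
    (h₁ : FDWitness sim ser A B C₁) (h₂ : FDWitness sim ser A B C₂) :
    ReflTransGen (Fold sim ser) ((A ∪ C₁) :: consNonempty (B \ C₁) z)
      ((A ∪ (C₁ ∪ C₂)) :: consNonempty (B \ (C₁ ∪ C₂)) z) := by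
  by_cases hne : (C₂ \ C₁).Nonempty
  · have hB : (B \ C₁).Nonempty := hne.mono (Finset.sdiff_subset_sdiff h₂.subset subset_rfl)
    have hv := (Fold.mk (w := []) hu h₁).isStepSeq_right hsim_symm hser_sub
    rw [List.nil_append, consNonempty_of_nonempty hB] at hv
    rw [consNonempty_of_nonempty hB]
    have hA : A ∪ C₁ ∪ C₂ \ C₁ = A ∪ (C₁ ∪ C₂) := by
      rw [Finset.union_assoc, Finset.union_sdiff_self_eq_union]
    have hrest : (B \ C₁) \ (C₂ \ C₁) = B \ (C₁ ∪ C₂) := by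
      ext x; simp only [Finset.mem_sdiff, Finset.mem_union]; tauto
    rw [← hA, ← hrest]
    exact .single (Fold.mk (w := []) hv (h₁.sdiff h₂ hne))
  · rw [Finset.union_eq_left.2 (Finset.sdiff_eq_empty_iff_subset.1
      (Finset.not_nonempty_iff_eq_empty.1 hne))]

theorem reflTransGen_fold_unsplit (hu : IsStepSeq sim (w ++ C :: consNonempty (D \ C) z))
    (hCD : C ⊆ D) (h : ∀ c ∈ C, ∀ d ∈ D \ C, ser c d) :
    ReflTransGen (Fold sim ser) (w ++ C :: consNonempty (D \ C) z) (w ++ D :: z) := by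
  by_cases hne : (D \ C).Nonempty
  · rw [consNonempty_of_nonempty hne] at hu ⊢
    have hDC : IsStep sim (D \ C) := (isStepSeq_append.1 hu).2 _ (by simp)
    simpa [Finset.union_sdiff_of_subset hCD] using
      ReflTransGen.single (Fold.mk hu (FDWitness.of_ser hDC h))
  · have hDC := Finset.not_nonempty_iff_eq_empty.1 hne
    rw [hDC, consNonempty_empty, hCD.antisymm (Finset.sdiff_eq_empty_iff_subset.1 hDC)]

theorem join_fold_adjacent (hsim_irr : ∀ a, ¬ sim a a) (hsim_symm : ∀ a b, sim a b → sim b a)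
    (hser_sub : ∀ a b, ser a b → sim a b) {C₁ C₂ : Finset E}
    (hu : IsStepSeq sim (A :: B :: D :: z)) (h₁ : FDWitness sim ser A B C₁)
    (h₂ : FDWitness sim ser B D C₂) :
    Join (ReflTransGen (Fold sim ser)) ((A ∪ C₁) :: consNonempty (B \ C₁) (D :: z))
      (A :: (B ∪ C₂) :: consNonempty (D \ C₂) z) := by
  have hsplit : (B ∪ C₂) \ C₁ = B \ C₁ ∪ C₂ := by
    rw [Finset.union_sdiff_distrib, Finset.sdiff_eq_self_of_disjoint
      ((disjoint_of_ser hsim_irr hser_sub h₂.ser_left).symm.mono_right h₁.subset)]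
  have h₁' : FDWitness sim ser A (B ∪ C₂) C₁ := by
    refine ⟨h₁.isStep, h₁.subset.trans Finset.subset_union_left, h₁.ser_left, ?_⟩
    intro c hc b hb
    rcases Finset.mem_union.1 (hsplit ▸ hb) with hb | hb
    · exact h₁.ser_right c hc b hb
    · exact h₂.ser_left c (h₁.subset hc) b hb
  have hv₂ : IsStepSeq sim (A :: (B ∪ C₂) :: consNonempty (D \ C₂) z) :=
    (Fold.mk (w := [A]) hu h₂).isStepSeq_right hsim_symm hser_sub
  have hfold₂ := Fold.mk (w := []) hv₂ h₁'
  rw [List.nil_append, List.nil_append, hsplit,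
    consNonempty_of_nonempty (h₂.isStep.1.mono Finset.subset_union_right)] at hfold₂
  by_cases hB : (B \ C₁).Nonempty
  · have hv₁ : IsStepSeq sim ((A ∪ C₁) :: (B \ C₁) :: D :: z) := by
      rw [← consNonempty_of_nonempty hB]
      exact (Fold.mk (w := []) hu h₁).isStepSeq_right hsim_symm hser_sub
    rw [consNonempty_of_nonempty hB]
    exact ⟨_, .single (Fold.mk (w := [A ∪ C₁]) hv₁ (h₂.mono_left Finset.sdiff_subset)),
      .single hfold₂⟩
  · -- `C₁ = B`: fold `B` into `A`, then fold `D \ C₂` back into `C₂`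
    have hB := Finset.not_nonempty_iff_eq_empty.1 hB
    rw [hB, Finset.empty_union] at hfold₂
    rw [hB, consNonempty_empty]
    exact ⟨_, .refl, .head hfold₂ (reflTransGen_fold_unsplit (w := [A ∪ C₁])
      (hfold₂.isStepSeq_right hsim_symm hser_sub) h₂.subset h₂.ser_right)⟩

theorem join_fold_distant (hsim_symm : ∀ a b, sim a b → sim b a)
    (hser_sub : ∀ a b, ser a b → sim a b) {A₁ B₁ C₁ A₂ B₂ C₂ : Finset E} {m : List (Finset E)}
    (hu : IsStepSeq sim (A₁ :: B₁ :: (m ++ A₂ :: B₂ :: z))) (h₁ : FDWitness sim ser A₁ B₁ C₁)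
    (h₂ : FDWitness sim ser A₂ B₂ C₂) :
    Join (ReflTransGen (Fold sim ser))
      ((A₁ ∪ C₁) :: consNonempty (B₁ \ C₁) (m ++ A₂ :: B₂ :: z))
      (A₁ :: B₁ :: (m ++ (A₂ ∪ C₂) :: consNonempty (B₂ \ C₂) z)) := by
  have hv₁ := (Fold.mk (w := []) hu h₁).isStepSeq_right hsim_symm hser_sub
  have hv₂ := (Fold.mk (w := A₁ :: B₁ :: m) hu h₂).isStepSeq_right hsim_symm hser_sub
  rw [List.nil_append, consNonempty_append, ← List.cons_append] at hv₁
  rw [consNonempty_append, ← List.cons_append]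
  refine ⟨_, .single (Fold.mk hv₁ h₂), .single ?_⟩
  simpa [consNonempty_append] using Fold.mk (w := []) hv₂ h₁

theorem join_fold_of_eq_append (hsim_irr : ∀ a, ¬ sim a a)
    (hsim_symm : ∀ a b, sim a b → sim b a) (hser_sub : ∀ a b, ser a b → sim a b)
    {A₁ B₁ C₁ A₂ B₂ C₂ : Finset E} {z₁ z₂ : List (Finset E)} (t : List (Finset E))
    (hu : IsStepSeq sim (A₁ :: B₁ :: z₁)) (h₁ : FDWitness sim ser A₁ B₁ C₁)
    (h₂ : FDWitness sim ser A₂ B₂ C₂) (ht : A₁ :: B₁ :: z₁ = t ++ A₂ :: B₂ :: z₂) :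
    Join (ReflTransGen (Fold sim ser)) ((A₁ ∪ C₁) :: consNonempty (B₁ \ C₁) z₁)
      (t ++ (A₂ ∪ C₂) :: consNonempty (B₂ \ C₂) z₂) := by
  match t, ht with
  | [], ht =>
    obtain ⟨rfl, rfl, rfl⟩ : A₁ = A₂ ∧ B₁ = B₂ ∧ z₁ = z₂ := by simpa using ht
    refine ⟨_, reflTransGen_fold_union_witness hsim_symm hser_sub hu h₁ h₂, ?_⟩
    rw [Finset.union_comm C₁]
    exact reflTransGen_fold_union_witness hsim_symm hser_sub hu h₂ h₁
  | [_], ht =>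
    obtain ⟨rfl, rfl, rfl⟩ : _ = A₁ ∧ B₁ = A₂ ∧ z₁ = B₂ :: z₂ := by simpa [eq_comm] using ht
    exact join_fold_adjacent hsim_irr hsim_symm hser_sub hu h₁ h₂
  | _ :: _ :: m, ht =>
    obtain ⟨rfl, rfl, rfl⟩ : _ = A₁ ∧ _ = B₁ ∧ z₁ = m ++ A₂ :: B₂ :: z₂ := by
      simpa [eq_comm] using ht
    exact join_fold_distant hsim_symm hser_sub hu h₁ h₂

theorem Fold.join (hsim_irr : ∀ a, ¬ sim a a) (hsim_symm : ∀ a b, sim a b → sim b a)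
    (hser_sub : ∀ a b, ser a b → sim a b) {v₁ v₂ : List (Finset E)} (h₁ : Fold sim ser u v₁)
    (h₂ : Fold sim ser u v₂) : Join (ReflTransGen (Fold sim ser)) v₁ v₂ := by
  obtain ⟨hu, w₁, z₁, A₁, B₁, C₁, hC₁, rfl, rfl⟩ := h₁
  obtain ⟨-, w₂, z₂, A₂, B₂, C₂, hC₂, he, rfl⟩ := h₂
  rcases List.append_eq_append_iff.1 he with ⟨t, rfl, ht⟩ | ⟨t, rfl, ht⟩
  · rw [List.append_assoc]
    exact join_fold_append_left (isStepSeq_append.1 hu).1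
      (join_fold_of_eq_append hsim_irr hsim_symm hser_sub t (isStepSeq_append.1 hu).2 hC₁ hC₂ ht)
  · rw [List.append_assoc] at hu ⊢
    obtain ⟨d, h₂d, h₁d⟩ := join_fold_append_left (isStepSeq_append.1 hu).1
      (join_fold_of_eq_append hsim_irr hsim_symm hser_sub t
        (ht ▸ (isStepSeq_append.1 hu).2) hC₂ hC₁ ht)
    exact ⟨d, h₁d, h₂d⟩

theorem ctBase_append_cons (hsim_symm : ∀ a b, sim a b → sim b a)
    (hser_sub : ∀ a b, ser a b → sim a b) (hw : IsStepSeq sim w) (hz : IsStepSeq sim z)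
    (hB : IsStep sim B) (hC : IsStep sim C) (h : ∀ b ∈ B, ∀ c ∈ C, ser b c) :
    CTBase sim ser (w ++ (B ∪ C) :: z) (w ++ B :: C :: z) :=
  ⟨w, z, B ∪ C, B, C, hw, hz, hB.union hsim_symm hser_sub hC h, hB, hC, rfl, h, rfl, rfl⟩

theorem Fold.of_ctBase (h : CTBase sim ser u v) : Fold sim ser v u := by
  obtain ⟨w, z, A, B, C, hw, hz, -, hB, hC, rfl, h, rfl, rfl⟩ := h
  simpa using Fold.mk (by simp [hw, hz, hB, hC]) (FDWitness.of_ser (ser := ser) hC h)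

theorem Fold.eqvGen_ctBase (hsim_symm : ∀ a b, sim a b → sim b a)
    (hser_sub : ∀ a b, ser a b → sim a b) (h : Fold sim ser u v) :
    EqvGen (CTBase sim ser) u v := by
  obtain ⟨hu, w, z, A, B, C, hC, rfl, rfl⟩ := h
  simp only [isStepSeq_append, isStepSeq_cons] at hu
  obtain ⟨hw, hA, hB, hz⟩ := hu
  by_cases hne : (B \ C).Nonempty
  · have hBC := hB.mono Finset.sdiff_subset hne
    have hsplit : CTBase sim ser (w ++ A :: B :: z) (w ++ A :: C :: (B \ C) :: z) := by
      simpa [Finset.union_sdiff_of_subset hC.subset] using ctBase_append_cons (w := w ++ [A])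
        hsim_symm hser_sub (by simp [hw, hA]) hz hC.isStep hBC hC.ser_right
    have hmerge := ctBase_append_cons (z := (B \ C) :: z) hsim_symm hser_sub hw
      (by simp [hz, hBC]) hA hC.isStep hC.ser_left
    rw [consNonempty_of_nonempty hne]
    exact .trans _ _ _ (.rel _ _ hsplit) (.symm _ _ (.rel _ _ hmerge))
  · have hCB := hC.subset.antisymm (Finset.sdiff_eq_empty_iff_subset.1
      (Finset.not_nonempty_iff_eq_empty.1 hne))
    rw [Finset.not_nonempty_iff_eq_empty.1 hne, consNonempty_empty, ← hCB]
    exact .symm _ _ (.rel _ _ (ctBase_append_cons hsim_symm hser_sub hw hz hA hC.isStep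
      hC.ser_left))

theorem ctEquiv_iff_eqvGen_fold (hsim_symm : ∀ a b, sim a b → sim b a)
    (hser_sub : ∀ a b, ser a b → sim a b) :
    CTEquiv sim ser u v ↔ EqvGen (Fold sim ser) u v := by
  rw [CTEquiv, leastEquiv_iff_eqvGen]
  exact ⟨fun h => EqvGen.eqvGen_le (fun _ _ h => .symm _ _ (.rel _ _ (Fold.of_ctBase h))) _ _ h,
    fun h => EqvGen.eqvGen_le (fun _ _ h => h.eqvGen_ctBase hsim_symm hser_sub) _ _ h⟩

end Comtrace

open Comtrace in
theorem stmt8_general [DecidableEq E] (sim ser : E → E → Prop)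
    (hsim_irr : ∀ a, ¬ sim a a) (hsim_symm : ∀ a b, sim a b → sim b a)
    (hser_sub : ∀ a b, ser a b → sim a b)
    (v : List (Finset E)) (hv : IsStepSeq sim v) :
    ∃! u : List (Finset E),
      IsStepSeq sim u ∧ Canonical sim ser u ∧ CTEquiv sim ser v u := by
  have hwf := wellFounded_flip_fold hsim_irr hser_sub
  have hlc : ∀ a b c, Fold sim ser a b → Fold sim ser a c →
      Join (ReflTransGen (Fold sim ser)) b c :=
    fun _ _ _ => Fold.join hsim_irr hsim_symm hser_sub
  obtain ⟨c, hvc, hc⟩ := exists_reflTransGen_forall_not hwf v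
  have hc_seq := isStepSeq_of_reflTransGen_fold hsim_symm hser_sub hv hvc
  have hvc_eqv := EqvGen.reflTransGen_le_eqvGen _ _ _ hvc
  refine ⟨c, ⟨hc_seq, (canonical_iff_forall_not_fold hc_seq).2 hc,
    (ctEquiv_iff_eqvGen_fold hsim_symm hser_sub).2 hvc_eqv⟩, ?_⟩
  rintro u ⟨hu, hu_can, hvu⟩
  have hcu := (hvc_eqv.symm _ _).trans _ _ _
    ((ctEquiv_iff_eqvGen_fold hsim_symm hser_sub).1 hvu)
  exact (eq_of_eqvGen_of_forall_not hwf hlc hcu hc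
    ((canonical_iff_forall_not_fold hu).1 hu_can)).symm

/-- Each step sequence is congruent to exactly one canonical step sequence. -/
theorem stmt8 [DecidableEq E] [Fintype E] (sim ser : E → E → Prop)
    (hsim_irr : ∀ a, ¬ sim a a) (hsim_symm : ∀ a b, sim a b → sim b a)
    (hser_sub : ∀ a b, ser a b → sim a b)
    (v : List (Finset E)) (hv : IsStepSeq sim v) :
    ∃! u : List (Finset E),
      IsStepSeq sim u ∧ Canonical sim ser u ∧ CTEquiv sim ser v u :=
  stmt8_general sim ser hsim_irr hsim_symm hser_sub v hv
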